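/- arXiv:2504.12148 — 5 statements merged into one kernel-verified Lean document; each statement's English description precedes it below -/
import Mathlib

section
/- Let G be a finite simple graph, let S be an even kernel of G, and let v ∈ S. Then the undirected edge geography position (G, v) is a P-position. -/
/-- P-positions of undirected edge geography on the edge set `F` with root `v`:
every move (removing an edge `s(v,w) ∈ F` and moving the root to `w`)
leads to a position that is not a P-position. -/
def UegPPos {V : Type} [DecidableEq V] (F : Finset (Sym2 V)) (v : V) : Prop :=
  ∀ w : V, ∀ h : s(v, w) ∈ F, ¬ UegPPos (F.erase s(v, w)) w
termination_by F.card
decreasing_by exact Finset.card_erase_lt_of_mem h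

/-- N-positions of undirected edge geography: some move leads to a P-position. -/
def UegNPos {V : Type} [DecidableEq V] (F : Finset (Sym2 V)) (v : V) : Prop :=
  ∃ w : V, ∃ _ : s(v, w) ∈ F, UegPPos (F.erase s(v, w)) w

/-- The grid graph `G_{m×n}`: the vertex `(i, j)` of the grid (with `1 ≤ i ≤ m`,
`1 ≤ j ≤ n`) is encoded as the pair `(⟨i-1, _⟩, ⟨j-1, _⟩) : Fin m × Fin n`;
two vertices `(i,j)` and `(i',j')` are adjacent iff `|i-i'| + |j-j'| = 1`. -/
def gridGraph (m n : ℕ) : SimpleGraph (Fin m × Fin n) where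
  Adj p q := ((p.1.val : ℤ) - q.1.val).natAbs + ((p.2.val : ℤ) - q.2.val).natAbs = 1
  symm := ⟨by intro p q h; omega⟩
  loopless := ⟨by intro p h; omega⟩

instance (m n : ℕ) : DecidableRel (gridGraph m n).Adj := fun p q =>
  inferInstanceAs
    (Decidable (((p.1.val : ℤ) - q.1.val).natAbs + ((p.2.val : ℤ) - q.2.val).natAbs = 1))

/-- An even kernel of a simple graph: a nonempty independent set `S` such that every
vertex not in `S` has an even number of neighbors in `S`. -/
def IsEvenKernel {V : Type} (G : SimpleGraph V) (S : Set V) : Prop :=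
  S.Nonempty ∧ (∀ u ∈ S, ∀ w ∈ S, ¬ G.Adj u w) ∧
    ∀ u, u ∉ S → Even {w | w ∈ S ∧ G.Adj u w}.ncard

/-!
Track `degreeInto S F u`, the number of neighbours in `S` of `u` along the remaining edges `F`.
The invariant is that `S` is independent in `F` and that the vertices outside `S` with odd
`degreeInto` are exactly the root when it lies outside `S`. From a root in `S` every move leads out of `S` and makes the new root
the unique odd vertex; from an odd root outside `S` the move back into `S` along an edge it
counts makes every `degreeInto` even again. Hence the positions with root in `S` are the P-positions.
-/

variable {V : Type}

noncomputable def degreeInto (S : Set V) (F : Finset (Sym2 V)) (u : V) : ℕ :=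
  {w | w ∈ S ∧ s(u, w) ∈ F}.ncard

lemma finite_setOf_mem_and_mk_mem (S : Set V) (F : Finset (Sym2 V)) (u : V) :
    {w | w ∈ S ∧ s(u, w) ∈ F}.Finite :=
  (F.finite_toSet.preimage fun _ _ _ _ => Sym2.congr_right.mp).subset fun _ hw => hw.2

variable [DecidableEq V] {S : Set V} {F : Finset (Sym2 V)} {x y u : V}

lemma degreeInto_erase_of_ne (hx : x ∈ S) (hu : u ∉ S) (huy : u ≠ y) :
    degreeInto S (F.erase s(x, y)) u = degreeInto S F u := by
  have hux : u ≠ x := fun h => hu (h ▸ hx)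
  unfold degreeInto
  congr 1
  ext w
  simp only [Set.mem_ofPred_eq, Finset.mem_erase, ne_eq, Sym2.eq_iff, hux, huy, false_and,
    or_self, not_false_eq_true, true_and]

lemma degreeInto_erase_add_one (hx : x ∈ S) (hy : y ∉ S) (hxy : s(x, y) ∈ F) :
    degreeInto S (F.erase s(x, y)) y + 1 = degreeInto S F y := by
  have hyx : y ≠ x := fun h => hy (h ▸ hx)
  have hset : {w | w ∈ S ∧ s(y, w) ∈ F.erase s(x, y)} = {w | w ∈ S ∧ s(y, w) ∈ F} \ {x} := by
    ext w
    simp only [Set.mem_ofPred_eq, Finset.mem_erase, ne_eq, Sym2.eq_iff, hyx, false_and, true_and,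
      false_or, Set.mem_sdiff, Set.mem_singleton_iff]
    tauto
  unfold degreeInto
  have hmem : x ∈ {w | w ∈ S ∧ s(y, w) ∈ F} := ⟨hx, Sym2.eq_swap ▸ hxy⟩
  rw [hset, Set.ncard_sdiff_singleton_add_one hmem (finite_setOf_mem_and_mk_mem S F y)]

lemma odd_degreeInto_erase_iff (hx : x ∈ S) (hy : y ∉ S) (hxy : s(x, y) ∈ F) (hu : u ∉ S) :
    Odd (degreeInto S (F.erase s(x, y)) u) ↔ (Odd (degreeInto S F u) ↔ u ≠ y) := by
  by_cases huy : u = y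
  · subst huy
    rw [← degreeInto_erase_add_one hx hy hxy, Nat.odd_add_one]
    tauto
  · rw [degreeInto_erase_of_ne hx hu huy]
    tauto

theorem uegPPos_iff_mem (hS : ∀ x ∈ S, ∀ y ∈ S, s(x, y) ∉ F) {v : V}
    (hpar : ∀ u ∉ S, Odd (degreeInto S F u) ↔ u = v) : UegPPos F v ↔ v ∈ S := by
  induction F using Finset.strongInduction generalizing v with
  | H F ih =>
  have hS_erase : ∀ e, ∀ x ∈ S, ∀ y ∈ S, s(x, y) ∉ F.erase e :=
    fun e x hx y hy h => hS x hx y hy (Finset.mem_of_mem_erase h)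
  rw [UegPPos]
  by_cases hv : v ∈ S
  · simp only [hv, iff_true]
    intro w hvw
    have hw : w ∉ S := fun hw => hS v hv w hw hvw
    refine (ih _ (Finset.erase_ssubset hvw) (hS_erase _) fun u hu => ?_).not.mpr hw
    have huv : u ≠ v := fun h => hu (h ▸ hv)
    rw [odd_degreeInto_erase_iff hv hw hvw hu, hpar u hu]
    tauto
  · simp only [hv, iff_false, not_forall, not_not]
    obtain ⟨x, hx, hvx⟩ : ∃ x ∈ S, s(v, x) ∈ F :=
      Set.nonempty_of_ncard_ne_zero ((hpar v hv).mpr rfl).pos.ne'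
    refine ⟨x, hvx, (ih _ (Finset.erase_ssubset hvx) (hS_erase _) fun u hu => ?_).mpr hx⟩
    have hux : u ≠ x := fun h => hu (h ▸ hx)
    rw [Sym2.eq_swap] at hvx ⊢
    rw [odd_degreeInto_erase_iff hx hv hvx hu, hpar u hu]
    tauto

/-- If `S` is an even kernel of a finite simple graph `G` and `v ∈ S`,
then the UEG position `(G, v)` is a P-position. -/
theorem ueg_ppos_of_evenKernel {V : Type} [Fintype V] [DecidableEq V]
    (G : SimpleGraph V) [DecidableRel G.Adj] (S : Set V)
    (hS : IsEvenKernel G S) (v : V) (hv : v ∈ S) :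
    UegPPos G.edgeFinset v := by
  obtain ⟨-, hind, heven⟩ := hS
  refine (uegPPos_iff_mem (fun x hx y hy h => hind x hx y hy ?_) fun u hu => ?_).mpr hv
  · rwa [SimpleGraph.mem_edgeFinset] at h
  have hdeg : degreeInto S G.edgeFinset u = {w | w ∈ S ∧ G.Adj u w}.ncard := by
    simp only [degreeInto, SimpleGraph.mem_edgeFinset, SimpleGraph.mem_edgeSet]
  have huv : u ≠ v := fun h => hu (h ▸ hv)
  rw [hdeg, ← Nat.not_even_iff_odd]
  tauto
end

section
/- Let G be a finite bipartite simple graph and v a vertex of G. Then the undirected edge geography position (G, v) is a P-position if and only if v belongs to some even kernel of G. -/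
/-!
If `v` lies in an even kernel `S`, the second player keeps the invariant "the root is in `S`,
`S` is independent and every vertex outside `S` has an even number of remaining edges into `S`":
a move out of `S` to `w` leaves `w` with an odd, hence positive, number of edges back into `S`,
and answering along one of them restores the invariant.

Conversely, 2-colour `G` and work over `ZMod 2`. A kernel vector of the adjacency matrix that is
supported on the colour class of `v` and nonzero at `v` has an even kernel as its support.
If there is none, duality gives a set `T` in the other class such that a vertex `a` of the class
of `v` has an odd number of neighbours in `T` exactly when `a = v`. The first player moves from `v`
into `T`, and then `T` plays the role of `S` above.
-/

open Finset Matrix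

theorem Finset.even_card_erase_iff {α : Type*} [DecidableEq α] {s : Finset α} {a : α}
    (h : a ∈ s) : Even #(s.erase a) ↔ ¬ Even #s := by
  rw [← card_erase_add_one h, Nat.even_add_one, not_not]

theorem Finset.sum_zmod_two_eq_card_filter {ι : Type*} (s : Finset ι) (x : ι → ZMod 2) :
    ∑ i ∈ s, x i = #{i ∈ s | x i ≠ 0} := by
  have hx : ∀ i, x i = if x i ≠ 0 then 1 else 0 := fun i => by
    generalize x i = z; revert z; decide
  rw [sum_congr rfl fun i _ => hx i, sum_boole]

theorem Matrix.exists_vecMul_eqOn_single_of_mulVec_eq_zero {K m n : Type*} [Field K] [Fintype m]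
    [Fintype n] [DecidableEq n] (A : Matrix m n K) (s : Set n) (j : n)
    (h : ∀ x : n → K, (∀ i ∉ s, x i = 0) → A *ᵥ x = 0 → x j = 0) :
    ∃ y : m → K, ∀ i ∈ s, (y ᵥ* A) i = if i = j then 1 else 0 := by
  set U : Submodule K (n → K) := Submodule.pi sᶜ fun _ => ⊥
  have hφ : LinearMap.proj j ∈ (U ⊓ LinearMap.ker A.mulVecLin).dualAnnihilator := by
    rw [Submodule.mem_dualAnnihilator]
    rintro x ⟨hxU, hx⟩
    exact h x (by simpa [U] using hxU) hx
  rw [Subspace.dualAnnihilator_inf_eq, ← LinearMap.range_dualMap_eq_dualAnnihilator_ker,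
    Submodule.mem_sup] at hφ
  obtain ⟨ψ, hψ, _, ⟨g, rfl⟩, hφ⟩ := hφ
  classical
  refine ⟨fun u => g (Pi.single u 1), fun i hi => ?_⟩
  have hψi : ψ (Pi.single i 1) = 0 := (Submodule.mem_dualAnnihilator ψ).1 hψ _ (by
    simp only [U, Submodule.mem_pi, Submodule.mem_bot]
    intro k hk
    exact Pi.single_eq_of_ne (by rintro rfl; exact hk hi) _)
  have := LinearMap.congr_fun hφ (Pi.single i 1)
  simp only [LinearMap.add_apply, hψi, zero_add, LinearMap.dualMap_apply,
    Matrix.mulVecLin_apply, mulVec_single_one, LinearMap.proj_apply, Pi.single_apply] at this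
  convert this using 1
  · rw [LinearMap.pi_apply_eq_sum_univ g]
    simp only [vecMul, dotProduct, col_apply, smul_eq_mul, mul_comm]
    refine sum_congr rfl fun u _ => ?_
    congr 2
    ext k
    simp only [Pi.single_apply, eq_comm]
  · simp only [eq_comm]

section EvenKernelOfEdges

variable {V : Type*} [DecidableEq V]

def edgeNeighborsIn (F : Finset (Sym2 V)) (S : Finset V) (u : V) : Finset V :=
  {w ∈ S | s(u, w) ∈ F}

theorem edgeNeighborsIn_erase_self (F : Finset (Sym2 V)) (S : Finset V) (u b : V) :
    edgeNeighborsIn (F.erase s(u, b)) S u = (edgeNeighborsIn F S u).erase b := by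
  ext w
  simp only [edgeNeighborsIn, mem_filter, mem_erase, ne_eq, Sym2.congr_right]
  tauto

theorem edgeNeighborsIn_erase_of_ne (F : Finset (Sym2 V)) (S : Finset V) {u a b : V}
    (hua : u ≠ a) (hub : u ≠ b) :
    edgeNeighborsIn (F.erase s(a, b)) S u = edgeNeighborsIn F S u := by
  ext w
  simp only [edgeNeighborsIn, mem_filter, mem_erase, and_congr_right_iff, and_iff_right_iff_imp]
  rintro - - h
  rcases Sym2.eq_iff.1 h with ⟨rfl, -⟩ | ⟨rfl, -⟩ <;> contradiction

/-- Nonemptiness is left out: in the game it is witnessed by the root. -/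
def IsEvenKernelOfEdges (F : Finset (Sym2 V)) (S : Finset V) : Prop :=
  (∀ a ∈ S, ∀ b ∈ S, s(a, b) ∉ F) ∧ ∀ u ∉ S, Even #(edgeNeighborsIn F S u)

def IsEvenKernelOfEdgesExcept (F : Finset (Sym2 V)) (S : Finset V) (w : V) : Prop :=
  (∀ a ∈ S, ∀ b ∈ S, s(a, b) ∉ F) ∧ ∀ u ∉ S, (Even #(edgeNeighborsIn F S u) ↔ u ≠ w)

theorem IsEvenKernelOfEdges.except_erase {F : Finset (Sym2 V)} {S : Finset V}
    (hS : IsEvenKernelOfEdges F S) {r w : V} (hr : r ∈ S) (hrw : s(r, w) ∈ F) :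
    w ∉ S ∧ IsEvenKernelOfEdgesExcept (F.erase s(r, w)) S w := by
  have hw : w ∉ S := fun hw => hS.1 r hr w hw hrw
  refine ⟨hw, fun a ha b hb hab => hS.1 a ha b hb (mem_of_mem_erase hab), fun u hu => ?_⟩
  rcases eq_or_ne u w with rfl | huw
  · have hr' : r ∈ edgeNeighborsIn F S u := mem_filter.2 ⟨hr, Sym2.eq_swap ▸ hrw⟩
    rw [Sym2.eq_swap, edgeNeighborsIn_erase_self, even_card_erase_iff hr']
    simpa using hS.2 u hu
  · have hur : u ≠ r := fun h => hu (h ▸ hr)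
    rw [edgeNeighborsIn_erase_of_ne F S hur huw]
    simpa [huw] using hS.2 u hu

theorem IsEvenKernelOfEdgesExcept.exists_erase {F : Finset (Sym2 V)} {S : Finset V} {w : V}
    (hS : IsEvenKernelOfEdgesExcept F S w) (hw : w ∉ S) :
    ∃ s ∈ S, s(w, s) ∈ F ∧ IsEvenKernelOfEdges (F.erase s(w, s)) S := by
  have hodd : ¬ Even #(edgeNeighborsIn F S w) := by simpa using hS.2 w hw
  obtain ⟨s, hs⟩ := card_pos.1 (Nat.pos_of_ne_zero fun h => hodd (h ▸ Even.zero))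
  obtain ⟨hsS, hws⟩ := mem_filter.1 hs
  refine ⟨s, hsS, hws, fun a ha b hb hab => hS.1 a ha b hb (mem_of_mem_erase hab),
    fun u hu => ?_⟩
  rcases eq_or_ne u w with rfl | huw
  · rw [edgeNeighborsIn_erase_self, even_card_erase_iff hs]
    exact hodd
  · have hus : u ≠ s := fun h => hu (h ▸ hsS)
    rw [edgeNeighborsIn_erase_of_ne F S huw hus]
    exact (hS.2 u hu).2 huw

end EvenKernelOfEdges

section Game

variable {V : Type} [DecidableEq V]

theorem IsEvenKernelOfEdges.uegPPos {F : Finset (Sym2 V)} {S : Finset V}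
    (hS : IsEvenKernelOfEdges F S) {r : V} (hr : r ∈ S) : UegPPos F r := by
  induction F using Finset.strongInduction generalizing r with
  | H F ih =>
    rw [UegPPos]
    intro w hrw hP
    obtain ⟨hw, hS₁⟩ := hS.except_erase hr hrw
    obtain ⟨s, hs, hws, hS₂⟩ := hS₁.exists_erase hw
    rw [UegPPos] at hP
    exact hP s hws (ih _ ((erase_subset _ _).trans_ssubset (erase_ssubset hrw)) hS₂ hs)

theorem IsEvenKernelOfEdgesExcept.not_uegPPos {F : Finset (Sym2 V)} {S : Finset V} {w : V}
    (hS : IsEvenKernelOfEdgesExcept F S w) (hw : w ∉ S) : ¬ UegPPos F w := by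
  obtain ⟨s, hs, hws, hS'⟩ := hS.exists_erase hw
  rw [UegPPos]
  exact fun hP => hP s hws (hS'.uegPPos hs)

end Game

namespace SimpleGraph

theorem Coloring.not_adj_of_ne_of_ne {V : Type*} {G : SimpleGraph V} (c : G.Coloring (Fin 2))
    {a b : V} {i : Fin 2} (ha : c a ≠ i) (hb : c b ≠ i) : ¬ G.Adj a b := fun hab =>
  c.valid hab (by omega)

variable {V : Type} [Fintype V] [DecidableEq V] (G : SimpleGraph V) [DecidableRel G.Adj]

theorem edgeNeighborsIn_edgeFinset (S : Finset V) (u : V) :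
    edgeNeighborsIn G.edgeFinset S u = {w ∈ S | G.Adj u w} := by
  simp only [edgeNeighborsIn, mem_edgeFinset, mem_edgeSet]

theorem isEvenKernel_coe_iff (S : Finset V) :
    IsEvenKernel G S ↔ S.Nonempty ∧ IsEvenKernelOfEdges G.edgeFinset S := by
  simp only [IsEvenKernel, IsEvenKernelOfEdges, edgeNeighborsIn_edgeFinset, mem_edgeFinset,
    mem_edgeSet, coe_nonempty, mem_coe, ← coe_filter, Set.ncard_coe_finset]

theorem isEvenKernelOfEdges_of_adjMatrix_mulVec_eq_zero {x : V → ZMod 2}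
    (hind : ∀ a b, x a ≠ 0 → x b ≠ 0 → ¬ G.Adj a b) (hx : G.adjMatrix (ZMod 2) *ᵥ x = 0) :
    IsEvenKernelOfEdges G.edgeFinset {u | x u ≠ 0} := by
  refine ⟨fun a ha b hb hab => ?_, fun u _ => ?_⟩
  · simp only [mem_filter_univ, mem_edgeFinset, mem_edgeSet] at ha hb hab
    exact hind a b ha hb hab
  · have hu := congr_fun hx u
    rw [Pi.zero_apply, adjMatrix_mulVec_apply, sum_zmod_two_eq_card_filter] at hu
    rw [edgeNeighborsIn_edgeFinset, ← ZMod.natCast_eq_zero_iff_even]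
    convert hu using 3
    ext w
    simp [and_comm]

theorem isEvenKernelOfEdgesExcept_of_vecMul_adjMatrix (c : G.Coloring (Fin 2)) {v : V}
    {y : V → ZMod 2}
    (hy : ∀ a, c a = c v → (y ᵥ* G.adjMatrix (ZMod 2)) a = if a = v then 1 else 0) :
    IsEvenKernelOfEdgesExcept G.edgeFinset {u | c u ≠ c v ∧ y u ≠ 0} v := by
  refine ⟨fun a ha b hb hab => ?_, fun u _ => ?_⟩
  · simp only [mem_filter_univ, mem_edgeFinset, mem_edgeSet] at ha hb hab
    exact c.not_adj_of_ne_of_ne ha.1 hb.1 hab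
  rw [edgeNeighborsIn_edgeFinset]
  by_cases hu : c u = c v
  · have hcount := hy u hu
    rw [adjMatrix_vecMul_apply, sum_zmod_two_eq_card_filter] at hcount
    have hT : {w ∈ ({u | c u ≠ c v ∧ y u ≠ 0} : Finset V) | G.Adj u w} =
        {w ∈ G.neighborFinset u | y w ≠ 0} := by
      ext w
      simp only [mem_filter, mem_univ, true_and, mem_neighborFinset]
      exact ⟨fun ⟨⟨_, hw⟩, huw⟩ => ⟨huw, hw⟩,
        fun ⟨huw, hw⟩ => ⟨⟨hu ▸ (c.valid huw).symm, hw⟩, huw⟩⟩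
    rw [hT, ← ZMod.natCast_eq_zero_iff_even, hcount]
    split_ifs <;> simp_all
  · have hT : {w ∈ ({u | c u ≠ c v ∧ y u ≠ 0} : Finset V) | G.Adj u w} = ∅ :=
      filter_eq_empty_iff.2 fun w hw => c.not_adj_of_ne_of_ne hu (mem_filter.1 hw).2.1
    rw [hT, card_empty]
    exact iff_of_true Even.zero (by rintro rfl; exact hu rfl)

theorem exists_isEvenKernelOfEdges_or_isEvenKernelOfEdgesExcept (c : G.Coloring (Fin 2))
    (v : V) : (∃ S, v ∈ S ∧ IsEvenKernelOfEdges G.edgeFinset S) ∨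
      ∃ T, v ∉ T ∧ IsEvenKernelOfEdgesExcept G.edgeFinset T v := by
  by_cases h : ∃ x : V → ZMod 2, (∀ u ∉ {a | c a = c v}, x u = 0) ∧
      G.adjMatrix (ZMod 2) *ᵥ x = 0 ∧ x v ≠ 0
  · obtain ⟨x, hsupp, hx, hxv⟩ := h
    have hcol : ∀ a, x a ≠ 0 → c a = c v := fun a => not_imp_comm.1 (hsupp a)
    refine .inl ⟨_, by simpa using hxv,
      G.isEvenKernelOfEdges_of_adjMatrix_mulVec_eq_zero (fun a b ha hb hab => ?_) hx⟩
    exact c.valid hab ((hcol a ha).trans (hcol b hb).symm)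
  · push Not at h
    obtain ⟨y, hy⟩ := (G.adjMatrix (ZMod 2)).exists_vecMul_eqOn_single_of_mulVec_eq_zero
      {a | c a = c v} v h
    exact .inr ⟨_, by simp, G.isEvenKernelOfEdgesExcept_of_vecMul_adjMatrix c hy⟩

end SimpleGraph

/-- For a finite bipartite simple graph `G` and a vertex `v`,
the UEG position `(G, v)` is a P-position iff `v` lies in some even kernel of `G`. -/
theorem ueg_ppos_iff_evenKernel_of_bipartite {V : Type} [Fintype V] [DecidableEq V]
    (G : SimpleGraph V) [DecidableRel G.Adj] (hbip : G.Colorable 2) (v : V) :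
    UegPPos G.edgeFinset v ↔ ∃ S : Set V, IsEvenKernel G S ∧ v ∈ S := by
  constructor
  · intro hP
    obtain ⟨c⟩ := hbip
    rcases G.exists_isEvenKernelOfEdges_or_isEvenKernelOfEdgesExcept c v with
      ⟨S, hvS, hS⟩ | ⟨T, hvT, hT⟩
    · exact ⟨S, (G.isEvenKernel_coe_iff S).2 ⟨⟨v, hvS⟩, hS⟩, hvS⟩
    · exact absurd hP (hT.not_uegPPos hvT)
  · rintro ⟨S, hS, hvS⟩
    obtain ⟨S, rfl⟩ := S.toFinite.exists_finset_coe
    exact ((G.isEvenKernel_coe_iff S).1 hS).2.uegPPos hvS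
end

section
/- Let m, n ≥ 1, let G = G_{m×n} be the grid graph, and let d = gcd(m+1, n+1). For every integer k with 0 ≤ k ≤ d, the set S_k = {(i,j) ∈ {1,…,m}×{1,…,n} : d ∤ i, d ∤ j, and (i+j ≡ k (mod 2d) or i+j ≡ −k (mod 2d) or i−j ≡ k (mod 2d) or i−j ≡ −k (mod 2d))} is an independent set of G, and every vertex u of G with u ∉ S_k has an even number of neighbors in S_k. In particular, whenever S_k is nonempty, S_k is an even kernel of G. -/
/-- The set `S_k` of vertices `(i,j)` of the grid `G_{m×n}` with `d ∤ i`, `d ∤ j` and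
`i + j ≡ ±k (mod 2d)` or `i - j ≡ ±k (mod 2d)` (here `i = p.1.val + 1`,
`j = p.2.val + 1`). -/
def gridSk (m n d k : ℕ) : Set (Fin m × Fin n) :=
  {p | ¬ d ∣ (p.1.val + 1) ∧ ¬ d ∣ (p.2.val + 1) ∧
    (((p.1.val + 1 : ℤ) + (p.2.val + 1)) ≡ (k : ℤ) [ZMOD (2 * d)] ∨
     ((p.1.val + 1 : ℤ) + (p.2.val + 1)) ≡ (-k : ℤ) [ZMOD (2 * d)] ∨
     ((p.1.val + 1 : ℤ) - (p.2.val + 1)) ≡ (k : ℤ) [ZMOD (2 * d)] ∨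
     ((p.1.val + 1 : ℤ) - (p.2.val + 1)) ≡ (-k : ℤ) [ZMOD (2 * d)])}

/-!
In integer coordinates `(x, y) = (i, j)`, membership in `S_k` depends only on `±x`, `±y` and `±k`
modulo `2d` and is symmetric in `x, y`: the lines `d ∣ x` and `d ∣ y` act as mirrors, and `S_k`
is the orbit under these reflections of the billiard path `x + y = k`, `x + y = 2d - k`,
`|x - y| = k` in the square `(0, d)²`. The parity of the number of neighbours in `S_k` is
invariant under the same reflections; it is even on a mirror, where the two neighbours across
the mirror are reflections of each other and the other two lie on the mirror, and inside the
square it is a linear-arithmetic check. Since `d` divides `m + 1` and `n + 1`, the lattice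
neighbours of a grid vertex that fall outside the grid lie on mirrors. Independence holds because
`x + y ≡ k (mod 2)` on `S_k`.
-/

lemma Int.neg_modEq_iff {a b n : ℤ} : -a ≡ b [ZMOD n] ↔ a ≡ -b [ZMOD n] := by
  rw [← Int.neg_modEq_neg, neg_neg]

lemma Int.modEq_iff_eq_of_abs_sub_lt {a b n : ℤ} (h : |b - a| < n) :
    a ≡ b [ZMOD n] ↔ a = b := by
  rw [Int.modEq_iff_dvd]
  exact ⟨fun hn => (sub_eq_zero.1 (Int.eq_zero_of_abs_lt_dvd hn h)).symm, fun hab => by simp [hab]⟩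

lemma Int.exists_mem_Icc_modEq_or_modEq_neg {d : ℤ} (hd : 0 < d) (x : ℤ) :
    ∃ x' ∈ Set.Icc 0 d, x ≡ x' [ZMOD 2 * d] ∨ x ≡ -x' [ZMOD 2 * d] := by
  have h₀ := Int.emod_nonneg x (by omega : 2 * d ≠ 0)
  have h₁ := Int.emod_lt_of_pos x (by omega : 0 < 2 * d)
  by_cases h : x % (2 * d) ≤ d
  · exact ⟨x % (2 * d), ⟨h₀, h⟩, Or.inl (Int.mod_modEq x _).symm⟩
  · refine ⟨2 * d - x % (2 * d), ⟨by omega, by omega⟩, Or.inr ?_⟩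
    rw [neg_sub, Int.modEq_sub_modulus_iff]
    exact (Int.mod_modEq x _).symm

/-- The number of lattice neighbours of `(i, j)` satisfying `P` is even
(`even_card_filter_latticeNeighbors_iff`). -/
def EvenNeighbors (P : ℤ → ℤ → Prop) (i j : ℤ) : Prop :=
  (P (i + 1) j ↔ P (i - 1) j) ↔ (P i (j + 1) ↔ P i (j - 1))

def latticeNeighbors (q : ℤ × ℤ) : Finset (ℤ × ℤ) :=
  {(q.1 + 1, q.2), (q.1 - 1, q.2)} ∪ {(q.1, q.2 + 1), (q.1, q.2 - 1)}

lemma Finset.even_card_filter_pair_iff {α : Type*} [DecidableEq α] {p : α → Prop}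
    [DecidablePred p] {a b : α} (hab : a ≠ b) :
    Even (({a, b} : Finset α).filter p).card ↔ (p a ↔ p b) := by
  rw [Finset.filter_insert, Finset.filter_singleton]
  by_cases ha : p a <;> by_cases hb : p b <;> simp [ha, hb, hab]

lemma even_card_filter_latticeNeighbors_iff {P : ℤ → ℤ → Prop} [DecidableRel P] (q : ℤ × ℤ) :
    Even ((latticeNeighbors q).filter fun p => P p.1 p.2).card ↔ EvenNeighbors P q.1 q.2 := by
  have hdisj : Disjoint ({(q.1 + 1, q.2), (q.1 - 1, q.2)} : Finset (ℤ × ℤ))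
      {(q.1, q.2 + 1), (q.1, q.2 - 1)} := by
    simp only [Finset.disjoint_left, Finset.mem_insert, Finset.mem_singleton, Prod.ext_iff]
    omega
  rw [latticeNeighbors, Finset.filter_union,
    Finset.card_union_of_disjoint (Finset.disjoint_filter_filter hdisj), Nat.even_add,
    Finset.even_card_filter_pair_iff (by simp only [ne_eq, Prod.mk.injEq]; omega),
    Finset.even_card_filter_pair_iff (by simp only [ne_eq, Prod.mk.injEq]; omega), EvenNeighbors]

section EvenNeighbors

variable {P : ℤ → ℤ → Prop} {d : ℤ}

lemma evenNeighbors_comm (hP : ∀ x y, P x y ↔ P y x) (i j : ℤ) :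
    EvenNeighbors P i j ↔ EvenNeighbors P j i := by
  rw [EvenNeighbors, EvenNeighbors, hP (j + 1), hP (j - 1), hP j (i + 1), hP j (i - 1)]
  exact iff_comm

lemma evenNeighbors_congr_left (hneg : ∀ x y, P (-x) y ↔ P x y)
    (hper : ∀ {x x'}, x ≡ x' [ZMOD 2 * d] → ∀ y, P x y ↔ P x' y) {i i' : ℤ}
    (h : i ≡ i' [ZMOD 2 * d] ∨ i ≡ -i' [ZMOD 2 * d]) (j : ℤ) :
    EvenNeighbors P i j ↔ EvenNeighbors P i' j := by
  rcases h with h | h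
  · simp only [EvenNeighbors, hper (h.add_right 1), hper (h.sub_right 1), hper h]
  · have hplus : i + 1 ≡ -(i' - 1) [ZMOD 2 * d] := by convert h.add_right 1 using 1; ring
    have hminus : i - 1 ≡ -(i' + 1) [ZMOD 2 * d] := by convert h.sub_right 1 using 1; ring
    simp only [EvenNeighbors, hper hplus, hper hminus, hper h, hneg]
    exact iff_congr Iff.comm Iff.rfl

lemma evenNeighbors_of_mirror {i : ℤ} (hrefl : ∀ y, P (i + 1) y ↔ P (i - 1) y)
    (hi : ∀ y, ¬ P i y) (j : ℤ) : EvenNeighbors P i j := by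
  simp only [EvenNeighbors, hrefl, hi]

theorem evenNeighbors_of_box (hd : 0 < d) (hcomm : ∀ x y, P x y ↔ P y x)
    (hneg : ∀ x y, P (-x) y ↔ P x y)
    (hper : ∀ {x x'}, x ≡ x' [ZMOD 2 * d] → ∀ y, P x y ↔ P x' y)
    (hzero : ∀ y, ¬ P 0 y) (hmod : ∀ y, ¬ P d y)
    (hbox : ∀ i j, 0 < i → i < d → 0 < j → j < d → EvenNeighbors P i j) (i j : ℤ) :
    EvenNeighbors P i j := by
  have hmirror_zero : ∀ j, EvenNeighbors P 0 j :=
    evenNeighbors_of_mirror (fun y => by simpa using (hneg 1 y).symm) hzero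
  have hmirror_mod : ∀ j, EvenNeighbors P d j :=
    evenNeighbors_of_mirror
      (fun y => (hper (Int.modEq_iff_dvd.2 ⟨-1, by ring⟩) y).trans (hneg (d - 1) y)) hmod
  obtain ⟨i', ⟨hi₀, hid⟩, hii'⟩ := Int.exists_mem_Icc_modEq_or_modEq_neg hd i
  obtain ⟨j', ⟨hj₀, hjd⟩, hjj'⟩ := Int.exists_mem_Icc_modEq_or_modEq_neg hd j
  rw [evenNeighbors_congr_left hneg hper hii', evenNeighbors_comm hcomm,
    evenNeighbors_congr_left hneg hper hjj']
  rcases (show j' = 0 ∨ j' = d ∨ (0 < j' ∧ j' < d) by omega) with hj | hj | hj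
  · exact hj ▸ hmirror_zero i'
  · exact hj ▸ hmirror_mod i'
  rw [evenNeighbors_comm hcomm]
  rcases (show i' = 0 ∨ i' = d ∨ (0 < i' ∧ i' < d) by omega) with hi | hi | hi
  · exact hi ▸ hmirror_zero j'
  · exact hi ▸ hmirror_mod j'
  exact hbox _ _ hi.1 hi.2 hj.1 hj.2

end EvenNeighbors

def IsSkPoint (d k x y : ℤ) : Prop :=
  ¬ d ∣ x ∧ ¬ d ∣ y ∧
    (x + y ≡ k [ZMOD 2 * d] ∨ x + y ≡ -k [ZMOD 2 * d] ∨
      x - y ≡ k [ZMOD 2 * d] ∨ x - y ≡ -k [ZMOD 2 * d])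

instance (d k : ℤ) : DecidableRel (IsSkPoint d k) := fun x y => by
  unfold IsSkPoint; infer_instance

namespace IsSkPoint

variable {d k : ℤ}

lemma comm (x y : ℤ) : IsSkPoint d k x y ↔ IsSkPoint d k y x := by
  rw [IsSkPoint, IsSkPoint, add_comm y x, ← neg_sub x y, Int.neg_modEq_iff, Int.neg_modEq_iff,
    neg_neg]
  tauto

lemma neg_left (x y : ℤ) : IsSkPoint d k (-x) y ↔ IsSkPoint d k x y := by
  rw [IsSkPoint, IsSkPoint, dvd_neg, show -x + y = -(x - y) by ring,
    show -x - y = -(x + y) by ring]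
  simp only [Int.neg_modEq_iff, neg_neg]
  tauto

lemma congr_left {x x' : ℤ} (h : x ≡ x' [ZMOD 2 * d]) (y : ℤ) :
    IsSkPoint d k x y ↔ IsSkPoint d k x' y := by
  simp only [IsSkPoint, (h.of_mul_left 2).dvd_iff, Int.ModEq, (h.add_right y).eq,
    (h.sub_right y).eq]

lemma neg_param : IsSkPoint d (-k) = IsSkPoint d k := by
  ext x y
  rw [IsSkPoint, IsSkPoint, neg_neg]
  tauto

lemma congr_param {k' : ℤ} (h : k ≡ k' [ZMOD 2 * d]) : IsSkPoint d k = IsSkPoint d k' := by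
  ext x y
  simp only [IsSkPoint, Int.ModEq, h.eq, h.neg.eq]

lemma not_zero_left (y : ℤ) : ¬ IsSkPoint d k 0 y := fun h => h.1 (dvd_zero d)

lemma not_self_left (y : ℤ) : ¬ IsSkPoint d k d y := fun h => h.1 dvd_rfl

lemma add_modEq_two {x y : ℤ} (h : IsSkPoint d k x y) : x + y ≡ k [ZMOD 2] := by
  rcases h.2.2 with h | h | h | h <;> have := h.of_mul_right d <;> unfold Int.ModEq at * <;> omega

lemma not_of_mem_latticeNeighbors {q q' : ℤ × ℤ} (hq : IsSkPoint d k q.1 q.2)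
    (hq' : q' ∈ latticeNeighbors q) : ¬ IsSkPoint d k q'.1 q'.2 := fun h' => by
  have hpar := hq.add_modEq_two
  have hpar' := h'.add_modEq_two
  simp only [latticeNeighbors, Finset.mem_union, Finset.mem_insert, Finset.mem_singleton,
    Prod.ext_iff] at hq'
  unfold Int.ModEq at hpar hpar'
  omega

lemma iff_of_mem_box (hk₀ : 0 ≤ k) (hkd : k ≤ d) {x y : ℤ} (hx₀ : 0 < x) (hxd : x < d)
    (hy₀ : 0 < y) (hyd : y < d) :
    IsSkPoint d k x y ↔ x + y = k ∨ x + y = 2 * d - k ∨ x - y = k ∨ y - x = k := by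
  have hndvd : ∀ z, 0 < z → z < d → ¬ d ∣ z := fun z h₀ h₁ hz => by
    have := Int.le_of_dvd h₀ hz
    omega
  have hsum : x + y ≡ k [ZMOD 2 * d] ↔ x + y = k :=
    Int.modEq_iff_eq_of_abs_sub_lt (by rw [abs_lt]; omega)
  have hsum' : x + y ≡ -k [ZMOD 2 * d] ↔ x + y = 2 * d - k := by
    rw [show -k = 2 * d - k - 2 * d by ring, Int.modEq_sub_modulus_iff]
    exact Int.modEq_iff_eq_of_abs_sub_lt (by rw [abs_lt]; omega)
  have hdiff : x - y ≡ k [ZMOD 2 * d] ↔ x - y = k :=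
    Int.modEq_iff_eq_of_abs_sub_lt (by rw [abs_lt]; omega)
  have hdiff' : x - y ≡ -k [ZMOD 2 * d] ↔ y - x = k := by
    rw [Int.modEq_iff_eq_of_abs_sub_lt (by rw [abs_lt]; omega)]
    omega
  rw [IsSkPoint, hsum, hsum', hdiff, hdiff', and_iff_right (hndvd x hx₀ hxd),
    and_iff_right (hndvd y hy₀ hyd)]

lemma iff_of_mem_closedBox (hk₀ : 0 ≤ k) (hkd : k ≤ d) {x y : ℤ} (hx₀ : 0 ≤ x) (hxd : x ≤ d)
    (hy₀ : 0 ≤ y) (hyd : y ≤ d) :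
    IsSkPoint d k x y ↔ 0 < x ∧ x < d ∧ 0 < y ∧ y < d ∧
      (x + y = k ∨ x + y = 2 * d - k ∨ x - y = k ∨ y - x = k) := by
  by_cases hx : 0 < x ∧ x < d ∧ 0 < y ∧ y < d
  · rw [iff_of_mem_box hk₀ hkd hx.1 hx.2.1 hx.2.2.1 hx.2.2.2]
    tauto
  · have hnot : ¬ IsSkPoint d k x y := by
      rcases (by omega : x = 0 ∨ x = d ∨ y = 0 ∨ y = d) with rfl | rfl | rfl | rfl
      · exact not_zero_left y
      · exact not_self_left y
      · exact (comm _ _).not.2 (not_zero_left x)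
      · exact (comm _ _).not.2 (not_self_left x)
    exact iff_of_false hnot fun h => hx ⟨h.1, h.2.1, h.2.2.1, h.2.2.2.1⟩

lemma evenNeighbors_of_mem_box (hk₀ : 0 ≤ k) (hkd : k ≤ d) {i j : ℤ} (hi₀ : 0 < i)
    (hid : i < d) (hj₀ : 0 < j) (hjd : j < d) : EvenNeighbors (IsSkPoint d k) i j := by
  rw [EvenNeighbors, iff_of_mem_closedBox hk₀ hkd (by omega) (by omega) (by omega) (by omega),
    iff_of_mem_closedBox hk₀ hkd (by omega) (by omega) (by omega) (by omega),
    iff_of_mem_closedBox hk₀ hkd (by omega) (by omega) (by omega) (by omega),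
    iff_of_mem_closedBox hk₀ hkd (by omega) (by omega) (by omega) (by omega)]
  omega

theorem evenNeighbors (hd : 0 < d) (k i j : ℤ) : EvenNeighbors (IsSkPoint d k) i j := by
  obtain ⟨k', ⟨hk₀, hkd⟩, hkk'⟩ := Int.exists_mem_Icc_modEq_or_modEq_neg hd k
  have hk : IsSkPoint d k = IsSkPoint d k' := by
    rcases hkk' with h | h
    · exact congr_param h
    · rw [congr_param h, neg_param]
  rw [hk]
  exact evenNeighbors_of_box hd comm neg_left congr_left not_zero_left not_self_left
    (fun _ _ hi₀ hid hj₀ hjd => evenNeighbors_of_mem_box hk₀ hkd hi₀ hid hj₀ hjd) i j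

end IsSkPoint

def gridCoord (m n : ℕ) (p : Fin m × Fin n) : ℤ × ℤ := (p.1 + 1, p.2 + 1)

lemma gridCoord_injective (m n : ℕ) : Function.Injective (gridCoord m n) := by
  intro p q h
  simp only [gridCoord, Prod.ext_iff, add_left_inj, Nat.cast_inj, Fin.val_inj] at h
  exact Prod.ext h.1 h.2

lemma mem_range_gridCoord {m n : ℕ} {x y : ℤ} :
    (x, y) ∈ Set.range (gridCoord m n) ↔ 1 ≤ x ∧ x ≤ m ∧ 1 ≤ y ∧ y ≤ n := by
  constructor
  · rintro ⟨p, hp⟩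
    simp only [gridCoord, Prod.ext_iff] at hp
    omega
  · rintro ⟨hx₁, hxm, hy₁, hyn⟩
    refine ⟨(⟨(x - 1).toNat, by omega⟩, ⟨(y - 1).toNat, by omega⟩), ?_⟩
    simp only [gridCoord, Prod.ext_iff]
    omega

lemma gridGraph_adj_iff {m n : ℕ} {u w : Fin m × Fin n} :
    (gridGraph m n).Adj u w ↔ gridCoord m n w ∈ latticeNeighbors (gridCoord m n u) := by
  simp only [gridGraph, gridCoord, latticeNeighbors, Finset.mem_union, Finset.mem_insert,
    Finset.mem_singleton, Prod.ext_iff]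
  omega

lemma mem_gridSk_iff {m n d k : ℕ} {p : Fin m × Fin n} :
    p ∈ gridSk m n d k ↔ IsSkPoint d k (gridCoord m n p).1 (gridCoord m n p).2 := by
  have hcast (a : ℕ) : d ∣ a + 1 ↔ (d : ℤ) ∣ (a : ℤ) + 1 := by
    exact_mod_cast Int.natCast_dvd_natCast.symm
  simp [gridSk, IsSkPoint, gridCoord, hcast]

lemma ncard_gridSk_adj {m n d k : ℕ} (hdm : d ∣ m + 1) (hdn : d ∣ n + 1) (u : Fin m × Fin n) :
    {w | w ∈ gridSk m n d k ∧ (gridGraph m n).Adj u w}.ncard =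
      ((latticeNeighbors (gridCoord m n u)).filter
        fun q : ℤ × ℤ => IsSkPoint d k q.1 q.2).card := by
  have hsub : ↑((latticeNeighbors (gridCoord m n u)).filter
      fun q : ℤ × ℤ => IsSkPoint d k q.1 q.2) ⊆ Set.range (gridCoord m n) := by
    rintro ⟨x, y⟩ hq
    simp only [Finset.coe_filter, Set.mem_ofPred_eq, latticeNeighbors, gridCoord,
      Finset.mem_union, Finset.mem_insert, Finset.mem_singleton, Prod.ext_iff] at hq
    obtain ⟨hq, hx, hy, -⟩ := hq
    have hdm' : (d : ℤ) ∣ m + 1 := by exact_mod_cast hdm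
    have hdn' : (d : ℤ) ∣ n + 1 := by exact_mod_cast hdn
    have := u.1.isLt
    have := u.2.isLt
    rw [mem_range_gridCoord]
    refine ⟨?_, ?_, ?_, ?_⟩ <;> by_contra h
    · exact hx (by rw [show x = 0 by omega]; exact dvd_zero _)
    · exact hx (by rwa [show x = m + 1 by omega])
    · exact hy (by rw [show y = 0 by omega]; exact dvd_zero _)
    · exact hy (by rwa [show y = n + 1 by omega])
  rw [← Set.ncard_coe_finset,
    ← Set.ncard_preimage_of_injective_subset_range (gridCoord_injective m n) hsub]
  congr 1
  ext w
  simp only [Set.mem_ofPred_eq, Set.mem_preimage, Finset.coe_filter, mem_gridSk_iff,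
    gridGraph_adj_iff]
  exact and_comm

theorem grid_Sk_evenKernel_general (m n : ℕ)
    (d : ℕ) (hd : d = Nat.gcd (m + 1) (n + 1)) (k : ℕ) :
    (∀ u ∈ gridSk m n d k, ∀ w ∈ gridSk m n d k, ¬ (gridGraph m n).Adj u w) ∧
    (∀ u, u ∉ gridSk m n d k →
      Even {w | w ∈ gridSk m n d k ∧ (gridGraph m n).Adj u w}.ncard) ∧
    ((gridSk m n d k).Nonempty → IsEvenKernel (gridGraph m n) (gridSk m n d k)) := by
  have hdm : d ∣ m + 1 := hd ▸ Nat.gcd_dvd_left _ _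
  have hdn : d ∣ n + 1 := hd ▸ Nat.gcd_dvd_right _ _
  have hd₀ : (0 : ℤ) < d := by exact_mod_cast hd ▸ Nat.gcd_pos_of_pos_left _ m.succ_pos
  have hindep : ∀ u ∈ gridSk m n d k, ∀ w ∈ gridSk m n d k, ¬ (gridGraph m n).Adj u w :=
    fun u hu w hw hadj => IsSkPoint.not_of_mem_latticeNeighbors (mem_gridSk_iff.1 hu)
      (gridGraph_adj_iff.1 hadj) (mem_gridSk_iff.1 hw)
  have heven : ∀ u, Even {w | w ∈ gridSk m n d k ∧ (gridGraph m n).Adj u w}.ncard := fun u => by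
    rw [ncard_gridSk_adj hdm hdn, even_card_filter_latticeNeighbors_iff]
    exact IsSkPoint.evenNeighbors hd₀ _ _ _
  exact ⟨hindep, fun u _ => heven u, fun hne => ⟨hne, hindep, fun u _ => heven u⟩⟩

/-- For `m, n ≥ 1`, `d = gcd(m+1, n+1)` and `0 ≤ k ≤ d`, the set `S_k`
is an independent set of `G_{m×n}`, every vertex not in `S_k` has an even number of
neighbors in `S_k`, and in particular `S_k` is an even kernel whenever it is nonempty. -/
theorem grid_Sk_evenKernel (m n : ℕ) (hm : 1 ≤ m) (hn : 1 ≤ n)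
    (d : ℕ) (hd : d = Nat.gcd (m + 1) (n + 1)) (k : ℕ) (hk : k ≤ d) :
    (∀ u ∈ gridSk m n d k, ∀ w ∈ gridSk m n d k, ¬ (gridGraph m n).Adj u w) ∧
    (∀ u, u ∉ gridSk m n d k →
      Even {w | w ∈ gridSk m n d k ∧ (gridGraph m n).Adj u w}.ncard) ∧
    ((gridSk m n d k).Nonempty → IsEvenKernel (gridGraph m n) (gridSk m n d k)) :=
  grid_Sk_evenKernel_general m n d hd k
end

section
/- Let m, n ≥ 1, let d = gcd(m+1, n+1), and for 0 ≤ k ≤ d let S_k = {(i,j) ∈ {1,…,m}×{1,…,n} : d ∤ i, d ∤ j, and (i+j ≡ k (mod 2d) or i+j ≡ −k (mod 2d) or i−j ≡ k (mod 2d) or i−j ≡ −k (mod 2d))}. Then every vertex (a,b) ∈ {1,…,m}×{1,…,n} with d ∤ a and d ∤ b belongs to S_k for exactly two values of k in {0, 1, …, d}. -/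
/-- Membership of `(a, b)` in the set
`S_k = {(i,j) : d ∤ i, d ∤ j, i + j ≡ ±k or i - j ≡ ±k (mod 2d)}`. -/
def memSk (d k a b : ℕ) : Prop :=
  ¬ d ∣ a ∧ ¬ d ∣ b ∧
    (((a : ℤ) + b) ≡ (k : ℤ) [ZMOD (2 * d)] ∨
     ((a : ℤ) + b) ≡ (-k : ℤ) [ZMOD (2 * d)] ∨
     ((a : ℤ) - b) ≡ (k : ℤ) [ZMOD (2 * d)] ∨
     ((a : ℤ) - b) ≡ (-k : ℤ) [ZMOD (2 * d)])

lemma char_aux (N x k : ℤ) (hN : 0 < N) (hk : 0 ≤ k) (hkN : 2 * k ≤ N) :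
    (x ≡ k [ZMOD N] ∨ x ≡ -k [ZMOD N]) ↔ k = min (x % N) (N - x % N) := by
  have h1 : 0 ≤ x % N := Int.emod_nonneg x hN.ne'
  have h2 : x % N < N := Int.emod_lt_of_pos x hN
  have hkk : k % N = k := Int.emod_eq_of_lt hk (by omega)
  simp only [Int.ModEq]
  rcases eq_or_lt_of_le hk with h0 | h0
  · rw [← h0]
    simp only [neg_zero, Int.zero_emod]
    omega
  · have hnk : (-k) % N = N - k := by
      have h3 : (-k + N * 1) % N = (-k) % N := Int.add_mul_emod_self_left (-k) N 1
      have h4 : (N - k) % N = N - k := Int.emod_eq_of_lt (by omega) (by omega)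
      rw [show -k + N * 1 = N - k by ring] at h3
      rw [h4] at h3
      exact h3.symm
    rw [hkk, hnk]
    omega

/-- For `m, n ≥ 1` and `d = gcd(m+1, n+1)`, every vertex `(a,b)` of the
grid `{1,…,m} × {1,…,n}` with `d ∤ a` and `d ∤ b` belongs to `S_k` for exactly two
values of `k ∈ {0, 1, …, d}`. -/
theorem grid_Sk_mem_exactly_two (m n : ℕ) (hm : 1 ≤ m) (hn : 1 ≤ n)
    (d : ℕ) (hd : d = Nat.gcd (m + 1) (n + 1)) (a b : ℕ)
    (ha1 : 1 ≤ a) (ham : a ≤ m) (hb1 : 1 ≤ b) (hbn : b ≤ n)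
    (hda : ¬ d ∣ a) (hdb : ¬ d ∣ b) :
    {k : ℕ | k ≤ d ∧ memSk d k a b}.ncard = 2 := by
  have hd0 : 0 < d := hd ▸ Nat.gcd_pos_of_pos_left _ (Nat.succ_pos m)
  have hdZ : (0:ℤ) < (d:ℤ) := by exact_mod_cast hd0
  set N : ℤ := 2 * (d:ℤ) with hNdef
  have hNpos : 0 < N := by omega
  set r1 : ℤ := ((a:ℤ) + b) % N with hr1
  set r2 : ℤ := ((a:ℤ) - b) % N with hr2
  have hr1b : 0 ≤ r1 ∧ r1 < N := ⟨Int.emod_nonneg _ hNpos.ne', Int.emod_lt_of_pos _ hNpos⟩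
  have hr2b : 0 ≤ r2 ∧ r2 < N := ⟨Int.emod_nonneg _ hNpos.ne', Int.emod_lt_of_pos _ hNpos⟩
  have e1 : r1 + N * (((a:ℤ) + b) / N) = (a:ℤ) + b := Int.emod_add_mul_ediv _ _
  have e2 : r2 + N * (((a:ℤ) - b) / N) = (a:ℤ) - b := Int.emod_add_mul_ediv _ _
  have hk1b : 0 ≤ min r1 (N - r1) ∧ min r1 (N - r1) ≤ d := by omega
  have hk2b : 0 ≤ min r2 (N - r2) ∧ min r2 (N - r2) ≤ d := by omega
  have key : {k : ℕ | k ≤ d ∧ memSk d k a b}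
      = {(min r1 (N - r1)).toNat, (min r2 (N - r2)).toNat} := by
    ext k
    simp only [Set.mem_setOf_eq, Set.mem_insert_iff, Set.mem_singleton_iff, memSk]
    have c1 : ∀ kk : ℤ, 0 ≤ kk → 2 * kk ≤ N →
        ((((a:ℤ) + b) ≡ kk [ZMOD N] ∨ ((a:ℤ) + b) ≡ -kk [ZMOD N]) ↔
          kk = min r1 (N - r1)) := fun kk h h' => char_aux N _ kk hNpos h h'
    have c2 : ∀ kk : ℤ, 0 ≤ kk → 2 * kk ≤ N →
        ((((a:ℤ) - b) ≡ kk [ZMOD N] ∨ ((a:ℤ) - b) ≡ -kk [ZMOD N]) ↔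
          kk = min r2 (N - r2)) := fun kk h h' => char_aux N _ kk hNpos h h'
    constructor
    · rintro ⟨hkd, -, -, hcong⟩
      have hkN : 2 * (k:ℤ) ≤ N := by omega
      have hk0 : (0:ℤ) ≤ (k:ℤ) := Int.natCast_nonneg k
      rcases hcong with h | h | h | h
      · left; have := (c1 k hk0 hkN).mp (Or.inl h); omega
      · left; have := (c1 k hk0 hkN).mp (Or.inr h); omega
      · right; have := (c2 k hk0 hkN).mp (Or.inl h); omega
      · right; have := (c2 k hk0 hkN).mp (Or.inr h); omega
    · rintro (h | h)
      · have hkZ : (k:ℤ) = min r1 (N - r1) := by omega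
        refine ⟨by omega, hda, hdb, ?_⟩
        rcases (c1 k (Int.natCast_nonneg k) (by omega)).mpr hkZ with h' | h'
        · exact Or.inl h'
        · exact Or.inr (Or.inl h')
      · have hkZ : (k:ℤ) = min r2 (N - r2) := by omega
        refine ⟨by omega, hda, hdb, ?_⟩
        rcases (c2 k (Int.natCast_nonneg k) (by omega)).mpr hkZ with h' | h'
        · exact Or.inr (Or.inr (Or.inl h'))
        · exact Or.inr (Or.inr (Or.inr h'))
  have hne : (min r1 (N - r1)).toNat ≠ (min r2 (N - r2)).toNat := by
    intro h
    have hor : r1 = r2 ∨ r1 + r2 = N := by omega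
    rcases hor with h' | h'
    · have : (d:ℤ) ∣ (b:ℤ) :=
        ⟨(((a:ℤ) + b) / N) - (((a:ℤ) - b) / N), by
          have e1' := e1; have e2' := e2
          simp only [hNdef] at e1' e2' ⊢
          linarith⟩
      exact hdb (by exact_mod_cast this)
    · have : (d:ℤ) ∣ (a:ℤ) :=
        ⟨1 + (((a:ℤ) + b) / N) + (((a:ℤ) - b) / N), by
          have e1' := e1; have e2' := e2
          simp only [hNdef] at e1' e2' ⊢
          linarith⟩
      exact hda (by exact_mod_cast this)
  rw [key, Set.ncard_pair hne]
end

section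
/- Let m, n ≥ 1, let G = G_{m×n} be the grid graph, let d = gcd(m+1, n+1), and let u = (a,b) be a vertex of G with d ∣ a or d ∣ b. Then there exists a vertex v adjacent to u in G such that the graph G − uv (the graph G with the single edge uv deleted) has an even kernel containing v. -/
/-!
Over `𝔽₂`, let `A` be the adjacency matrix of `G_{m×n}`. If `A x = e_u` and `x` is supported on
the colour class not containing `u` (restricting any solution to that class keeps `A x = e_u`, as
the grid is bipartite), then `S = supp x` is independent, every vertex other than `u`
has an even number of neighbours in `S`, and `u` has an odd number; deleting the edge to one of
them, `v`, makes `S` an even kernel of `G - uv` containing `v`.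

Since `A` is symmetric, `e_u` lies in its range as soon as every `y` with `y A = 0` vanishes at `u`.
Reading such a `y` row by row, row `i` is `F_i(P) r₁`, where `F_i` are the Fibonacci polynomials,
`P` is the adjacency operator of the path `P_n` and `r₁` the first row. The zero row `m + 1` gives
`F_{m+1}(P) r₁ = 0`, while `F_{n+1}(P) = 0`; as `F_{gcd(a,b)}` lies in the ideal `(F_a, F_b)`, row
`a` vanishes whenever `gcd(m+1, n+1) ∣ a`, and columns are handled by symmetry.
-/

open Polynomial Matrix

section FibPoly

variable (R : Type*) [CommRing R]

noncomputable def fibPoly : ℕ → R[X]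
  | 0 => 0
  | 1 => 1
  | k + 2 => X * fibPoly (k + 1) + fibPoly k

@[simp] theorem fibPoly_zero : fibPoly R 0 = 0 := rfl

@[simp] theorem fibPoly_one : fibPoly R 1 = 1 := rfl

theorem fibPoly_add_two (k : ℕ) : fibPoly R (k + 2) = X * fibPoly R (k + 1) + fibPoly R k := rfl

variable {R}

theorem fibPoly_add_add_one (a b : ℕ) :
    fibPoly R (a + b + 1) = fibPoly R (a + 1) * fibPoly R (b + 1) + fibPoly R a * fibPoly R b := by
  induction a using Nat.twoStepInduction with
  | zero => simp
  | one => rw [add_comm 1 b, fibPoly_add_two, fibPoly_add_two]; simp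
  | more a ih₀ ih₁ =>
    rw [show a + 2 + b + 1 = a + b + 1 + 2 by omega, fibPoly_add_two,
      show a + b + 1 + 1 = a + 1 + b + 1 by omega, ih₀, ih₁, fibPoly_add_two R (a + 1),
      fibPoly_add_two R a]
    ring

theorem isCoprime_fibPoly_succ (a : ℕ) : IsCoprime (fibPoly R a) (fibPoly R (a + 1)) := by
  induction a with
  | zero => simp [isCoprime_one_right]
  | succ a ih =>
    rw [fibPoly_add_two, add_comm (X * _), mul_comm X]
    exact ih.symm.add_mul_left_right X

theorem fibPoly_dvd_fibPoly {d a : ℕ} (h : d ∣ a) : fibPoly R d ∣ fibPoly R a := by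
  obtain ⟨t, rfl⟩ := h
  induction t with
  | zero => simp
  | succ t ih =>
    rcases d with _ | d
    · simp
    rw [show (d + 1) * (t + 1) = (d + 1) * t + d + 1 by ring, fibPoly_add_add_one]
    exact dvd_add (dvd_mul_left _ _) (ih.mul_right _)

theorem fibPoly_mem_span_add (a c : ℕ) :
    fibPoly R c ∈ Ideal.span {fibPoly R a, fibPoly R (c + a)} := by
  rcases a with _ | a
  · exact Ideal.subset_span (by simp)
  obtain ⟨s, t, hst⟩ := isCoprime_fibPoly_succ (R := R) a
  refine Ideal.mem_span_pair.2 ⟨t * fibPoly R c - s * fibPoly R (c + 1), s, ?_⟩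
  linear_combination fibPoly R c * hst + s * fibPoly_add_add_one (R := R) c a

theorem fibPoly_mem_span_mul_add (a q r : ℕ) :
    fibPoly R r ∈ Ideal.span {fibPoly R a, fibPoly R (q * a + r)} := by
  induction q with
  | zero => exact Ideal.subset_span (by simp)
  | succ q ih =>
    refine Ideal.span_le.2 ?_ ih
    rw [Set.insert_subset_iff, Set.singleton_subset_iff]
    refine ⟨Ideal.subset_span (by simp), ?_⟩
    rw [show (q + 1) * a + r = q * a + r + a by ring]
    exact fibPoly_mem_span_add a (q * a + r)

theorem fibPoly_gcd_mem_span (a b : ℕ) :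
    fibPoly R (Nat.gcd a b) ∈ Ideal.span {fibPoly R a, fibPoly R b} := by
  induction a, b using Nat.gcd.induction with
  | H0 b => exact Ideal.subset_span (by simp)
  | H1 a b _ ih =>
    rw [Nat.gcd_rec]
    refine Ideal.span_le.2 ?_ ih
    rw [Set.insert_subset_iff, Set.singleton_subset_iff]
    refine ⟨?_, Ideal.subset_span (by simp)⟩
    simpa only [Nat.div_add_mod', SetLike.mem_coe] using fibPoly_mem_span_mul_add a (b / a) (b % a)

theorem fibPoly_mem_span_of_gcd_dvd {a b c : ℕ} (h : Nat.gcd a b ∣ c) :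
    fibPoly R c ∈ Ideal.span {fibPoly R a, fibPoly R b} := by
  obtain ⟨p, hp⟩ := fibPoly_dvd_fibPoly (R := R) h
  rw [hp]
  exact Ideal.mul_mem_right _ _ (fibPoly_gcd_mem_span a b)

end FibPoly

section Recurrence

variable {R M : Type*} [CommRing R] [AddCommGroup M] [Module R M]

theorem eq_aeval_fibPoly_of_recurrence (T : Module.End R M) {N : ℕ} {r : ℕ → M} (h₀ : r 0 = 0)
    (hr : ∀ i, i + 2 ≤ N → r (i + 2) = T (r (i + 1)) + r i) :
    ∀ i ≤ N, r i = aeval T (fibPoly R i) (r 1) := by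
  intro i
  induction i using Nat.twoStepInduction with
  | zero => simp [h₀]
  | one => simp
  | more i ih₀ ih₁ =>
    intro hi
    rw [hr i hi, ih₁ (by omega), ih₀ (by omega), fibPoly_add_two, map_add, map_mul, aeval_X]
    rfl

theorem aeval_apply_eq_zero_of_mem_span {T : Module.End R M} {v : M} {p q₁ q₂ : R[X]}
    (hp : p ∈ Ideal.span {q₁, q₂}) (h₁ : aeval T q₁ v = 0) (h₂ : aeval T q₂ v = 0) :
    aeval T p v = 0 := by
  obtain ⟨α, β, rfl⟩ := Ideal.mem_span_pair.1 hp
  simp [Module.End.mul_apply, h₁, h₂]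

end Recurrence

section PathOperator

variable {R : Type*} [CommRing R]

variable (R) in
/-- The adjacency operator of the path `1 - 2 - ⋯ - n`, acting on vectors indexed by `ℕ` and
discarding everything outside `[1, n]`. -/
def pathOp (n : ℕ) : Module.End R (ℕ → R) where
  toFun v j := if 1 ≤ j ∧ j ≤ n then v (j - 1) + v (j + 1) else 0
  map_add' v w := by ext j; simp only [Pi.add_apply]; split_ifs <;> ring
  map_smul' c v := by
    ext j; simp only [Pi.smul_apply, smul_eq_mul, RingHom.id_apply]; split_ifs <;> ring

theorem pathOp_apply (n : ℕ) (v : ℕ → R) (j : ℕ) :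
    pathOp R n v j = if 1 ≤ j ∧ j ≤ n then v (j - 1) + v (j + 1) else 0 := rfl

variable [CharP R 2]

theorem aeval_pathOp_fibPoly_single_one {n k : ℕ} (hn : 1 ≤ n) (hk : k ≤ n + 1) :
    aeval (pathOp R n) (fibPoly R k) (Pi.single 1 1) =
      if 1 ≤ k ∧ k ≤ n then Pi.single k 1 else 0 := by
  set r : ℕ → ℕ → R := fun k => if 1 ≤ k ∧ k ≤ n then Pi.single k 1 else 0
  have hrec : ∀ i, i + 2 ≤ n + 1 → r (i + 2) = pathOp R n (r (i + 1)) + r i := by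
    intro i hi
    ext j
    simp only [r, pathOp_apply, Pi.add_apply, ite_apply, Pi.single_apply, Pi.zero_apply]
    split_ifs <;> first | omega | simp [CharTwo.add_self_eq_zero]
  have := eq_aeval_fibPoly_of_recurrence (pathOp R n) (by simp [r]) hrec k hk
  simpa [r, hn] using this.symm

theorem aeval_pathOp_fibPoly_eq_zero {n : ℕ} {v : ℕ → R} (hv : ∀ j, v j ≠ 0 → 1 ≤ j ∧ j ≤ n) :
    aeval (pathOp R n) (fibPoly R (n + 1)) v = 0 := by
  have hsum : v = ∑ k ∈ Finset.Icc 1 n, v k • Pi.single k 1 := by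
    ext j
    simp only [Finset.sum_apply, Pi.smul_apply, Pi.single_apply, smul_eq_mul, mul_ite, mul_one,
      mul_zero, Finset.sum_ite_eq, Finset.mem_Icc]
    split_ifs with h
    · rfl
    · by_contra hj; exact h (hv j hj)
  rw [hsum, map_sum]
  refine Finset.sum_eq_zero fun k hk => ?_
  obtain ⟨hk1, hkn⟩ := Finset.mem_Icc.1 hk
  have hn : 1 ≤ n := hk1.trans hkn
  have hsingle := aeval_pathOp_fibPoly_single_one (R := R) hn (show k ≤ n + 1 by omega)
  have hlast := aeval_pathOp_fibPoly_single_one (R := R) hn (le_refl (n + 1))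
  rw [if_pos ⟨hk1, hkn⟩] at hsingle
  rw [if_neg (by omega)] at hlast
  rw [map_smul, ← hsingle, ← Module.End.mul_apply, ← map_mul, mul_comm, map_mul,
    Module.End.mul_apply, hlast, map_zero, smul_zero]

end PathOperator

section GridKernel

variable {R : Type*} [CommRing R] {m n : ℕ}

/-- A vector of the kernel of the adjacency matrix of `G_{m×n}`, written as a function on `ℕ × ℕ`
vanishing outside `[1, m] × [1, n]`, so that the boundary conditions become zero padding. -/
def IsPaddedGridKernel (m n : ℕ) (z : ℕ → ℕ → R) : Prop :=
  (∀ i j, z i j ≠ 0 → 1 ≤ i ∧ i ≤ m ∧ 1 ≤ j ∧ j ≤ n) ∧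
    ∀ i < m, ∀ j < n, z i (j + 1) + z (i + 2) (j + 1) + z (i + 1) j + z (i + 1) (j + 2) = 0

theorem IsPaddedGridKernel.swap {z : ℕ → ℕ → R} (hz : IsPaddedGridKernel m n z) :
    IsPaddedGridKernel n m fun i j => z j i := by
  refine ⟨fun i j h => ?_, fun i hi j hj => ?_⟩
  · have := hz.1 j i h; omega
  · linear_combination hz.2 j hj i hi

theorem IsPaddedGridKernel.row_eq_zero [CharP R 2] {z : ℕ → ℕ → R}
    (hz : IsPaddedGridKernel m n z) {a : ℕ} (ha : Nat.gcd (m + 1) (n + 1) ∣ a) : z a = 0 := by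
  obtain ⟨hsupp, hsum⟩ := hz
  have hzero : ∀ i j, ¬(1 ≤ i ∧ i ≤ m ∧ 1 ≤ j ∧ j ≤ n) → z i j = 0 :=
    fun i j h => not_ne_iff.1 (mt (hsupp i j) h)
  by_cases ham : m + 1 < a
  · ext j; exact hzero a j (by omega)
  have hrows : ∀ i ≤ m + 1, z i = aeval (pathOp R n) (fibPoly R i) (z 1) := by
    refine eq_aeval_fibPoly_of_recurrence _ (funext fun j => hzero 0 j (by omega))
      fun i hi => funext fun j => ?_
    rw [Pi.add_apply, pathOp_apply]
    split_ifs with hj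
    · obtain ⟨j, rfl⟩ : ∃ j', j = j' + 1 := ⟨j - 1, by omega⟩
      rw [Nat.add_sub_cancel]
      linear_combination hsum i (by omega) j (by omega) -
        (z (i + 1) j + z (i + 1) (j + 2) + z i (j + 1)) * CharTwo.two_eq_zero (R := R)
    · rw [hzero _ _ (by omega), hzero i j (by omega), zero_add]
  have hm : aeval (pathOp R n) (fibPoly R (m + 1)) (z 1) = 0 :=
    (hrows (m + 1) le_rfl).symm.trans (funext fun j => hzero _ j (by omega))
  have hn : aeval (pathOp R n) (fibPoly R (n + 1)) (z 1) = 0 :=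
    aeval_pathOp_fibPoly_eq_zero fun j hj => by have := hsupp 1 j hj; omega
  rw [hrows a (by omega)]
  exact aeval_apply_eq_zero_of_mem_span (fibPoly_mem_span_of_gcd_dvd ha) hm hn

theorem IsPaddedGridKernel.column_eq_zero [CharP R 2] {z : ℕ → ℕ → R}
    (hz : IsPaddedGridKernel m n z) {b : ℕ} (hb : Nat.gcd (m + 1) (n + 1) ∣ b) (i : ℕ) :
    z i b = 0 :=
  congrFun (hz.swap.row_eq_zero (Nat.gcd_comm (m + 1) (n + 1) ▸ hb)) i

/-- `y` moved to `1`-based indices and padded by zeros: `gridPad y (i + 1) (j + 1) = y (i, j)`. -/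
def gridPad (y : Fin m × Fin n → R) (i j : ℕ) : R :=
  ∑ w, if w.1.val + 1 = i ∧ w.2.val + 1 = j then y w else 0

theorem gridPad_succ_succ (y : Fin m × Fin n → R) (p : Fin m × Fin n) :
    gridPad y (p.1 + 1) (p.2 + 1) = y p := by
  rw [gridPad, Finset.sum_eq_single p (fun w _ hw => if_neg fun h => hw ?_) (by simp)]
  · simp
  · ext <;> omega

theorem gridPad_ne_zero {y : Fin m × Fin n → R} {i j : ℕ} (h : gridPad y i j ≠ 0) :
    1 ≤ i ∧ i ≤ m ∧ 1 ≤ j ∧ j ≤ n := by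
  obtain ⟨w, -, hw⟩ := Finset.exists_ne_zero_of_sum_ne_zero h
  have := w.1.isLt; have := w.2.isLt
  split_ifs at hw with hij
  · omega
  · exact absurd rfl hw

theorem sum_neighborFinset_gridGraph (y : Fin m × Fin n → R) (p : Fin m × Fin n) :
    ∑ w ∈ (gridGraph m n).neighborFinset p, y w =
      gridPad y p.1 (p.2 + 1) + gridPad y (p.1 + 2) (p.2 + 1) + gridPad y (p.1 + 1) p.2 +
        gridPad y (p.1 + 1) (p.2 + 2) := by
  simp only [gridPad, ← Finset.sum_add_distrib, SimpleGraph.neighborFinset_eq_filter,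
    Finset.sum_filter]
  refine Finset.sum_congr rfl fun w _ => ?_
  by_cases h : (gridGraph m n).Adj p w <;> simp only [h, if_true, if_false] <;>
    simp only [gridGraph] at h <;> split_ifs <;> first | omega | simp

theorem isPaddedGridKernel_gridPad {y : Fin m × Fin n → R}
    (hy : y ᵥ* (gridGraph m n).adjMatrix R = 0) : IsPaddedGridKernel m n (gridPad y) := by
  refine ⟨fun i j => gridPad_ne_zero, fun i hi j hj => ?_⟩
  have := congrFun hy (⟨i, hi⟩, ⟨j, hj⟩)
  rwa [SimpleGraph.adjMatrix_vecMul_apply, sum_neighborFinset_gridGraph] at this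

theorem apply_eq_zero_of_vecMul_adjMatrix_gridGraph [CharP R 2] {y : Fin m × Fin n → R}
    (hy : y ᵥ* (gridGraph m n).adjMatrix R = 0) {u : Fin m × Fin n}
    (hu : Nat.gcd (m + 1) (n + 1) ∣ u.1 + 1 ∨ Nat.gcd (m + 1) (n + 1) ∣ u.2 + 1) : y u = 0 := by
  rw [← gridPad_succ_succ y u]
  rcases hu with hu | hu
  · exact congrFun ((isPaddedGridKernel_gridPad hy).row_eq_zero hu) _
  · exact (isPaddedGridKernel_gridPad hy).column_eq_zero hu _

end GridKernel

theorem Matrix.exists_mulVec_eq_of_forall_vecMul_eq_zero {K m n : Type*} [Field K] [Fintype m]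
    [DecidableEq m] [Fintype n] (A : Matrix m n K) {x : m → K}
    (h : ∀ y, y ᵥ* A = 0 → y ⬝ᵥ x = 0) : ∃ z, A *ᵥ z = x := by
  suffices x ∈ LinearMap.range A.mulVecLin from this
  rw [← Subspace.forall_mem_dualAnnihilator_apply_eq_zero_iff]
  intro φ hφ
  obtain ⟨y, rfl⟩ := (dotProductEquiv K m).surjective φ
  refine h y (dotProduct_eq_zero _ fun z => ?_)
  rw [← dotProduct_mulVec]
  exact (Submodule.mem_dualAnnihilator _).1 hφ _ (LinearMap.mem_range_self _ z)

namespace SimpleGraph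

variable {V : Type} [Fintype V] [DecidableEq V] (G : SimpleGraph V) [DecidableRel G.Adj]

omit [DecidableEq V] in
theorem natCast_ncard_setOf_eq_one_and_adj (x : V → ZMod 2) (p : V) :
    (({w | x w = 1 ∧ G.Adj p w}.ncard : ℕ) : ZMod 2) = ∑ w ∈ G.neighborFinset p, x w := by
  have : {w | x w = 1 ∧ G.Adj p w} = ↑((G.neighborFinset p).filter (x · = 1)) := by
    ext; simp [and_comm]
  rw [this, Set.ncard_coe_finset, Finset.card_filter, Nat.cast_sum]
  refine Finset.sum_congr rfl fun w _ => ?_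
  generalize x w = a
  revert a
  decide

theorem exists_mulVec_adjMatrix_eq_single_of_coloring {α : Type*} [NonAssocSemiring α]
    (c : G.Coloring Bool) {x : V → α} {u : V} (hx : G.adjMatrix α *ᵥ x = Pi.single u 1) :
    ∃ x' : V → α, G.adjMatrix α *ᵥ x' = Pi.single u 1 ∧ ∀ w, c w = c u → x' w = 0 := by
  refine ⟨fun w => if c w = c u then 0 else x w, funext fun p => ?_, fun w hw => if_pos hw⟩
  rw [adjMatrix_mulVec_apply]
  by_cases hp : c p = c u
  · rw [← hx, adjMatrix_mulVec_apply]
    refine Finset.sum_congr rfl fun w hw => if_neg ?_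
    rw [← hp]
    exact (c.valid ((G.mem_neighborFinset p w).1 hw)).symm
  · rw [Pi.single_eq_of_ne (by rintro rfl; exact hp rfl)]
    refine Finset.sum_eq_zero fun w hw => if_pos ?_
    have := c.valid ((G.mem_neighborFinset p w).1 hw)
    revert hp this
    cases c w <;> cases c p <;> cases c u <;> simp

theorem exists_adj_isEvenKernel_deleteEdges_of_independent {x : V → ZMod 2} {u : V}
    (hx : G.adjMatrix (ZMod 2) *ᵥ x = Pi.single u 1)
    (hind : ∀ w w', x w = 1 → x w' = 1 → ¬G.Adj w w') :
    ∃ v, G.Adj u v ∧ IsEvenKernel (G.deleteEdges {s(u, v)}) {w | x w = 1} ∧ x v = 1 := by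
  classical
  have hsum (p : V) : ∑ w ∈ G.neighborFinset p, x w = (Pi.single u 1 : V → ZMod 2) p := by
    rw [← congrFun hx p, adjMatrix_mulVec_apply]
  obtain ⟨v, hv, hxv⟩ : ∃ v ∈ G.neighborFinset u, x v ≠ 0 :=
    Finset.exists_ne_zero_of_sum_ne_zero (by simp [hsum])
  replace hxv : x v = 1 := by revert hxv; generalize x v = a; revert a; decide
  have huv := (G.mem_neighborFinset u v).1 hv
  set H := G.deleteEdges {s(u, v)}
  refine ⟨v, huv, ⟨⟨v, hxv⟩, fun w hw w' hw' h => hind w w' hw hw' h.1, fun p hp => ?_⟩, hxv⟩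
  show Even {w | x w = 1 ∧ H.Adj p w}.ncard
  rw [← ZMod.natCast_eq_zero_iff_even, natCast_ncard_setOf_eq_one_and_adj]
  by_cases hpu : p = u
  · subst hpu
    have : H.neighborFinset p = (G.neighborFinset p).erase v := by
      ext w; simp [H, huv.ne', and_comm, eq_comm]
    rw [this, ← add_left_inj (x v), Finset.sum_erase_add _ _ hv, hsum, hxv]
    simp
  · have hpv : p ≠ v := fun h => hp (h ▸ hxv)
    have : H.neighborFinset p = G.neighborFinset p := by
      ext w; simp [H, hpu, hpv]
    rw [this, hsum, Pi.single_eq_of_ne hpu]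

theorem exists_adj_isEvenKernel_deleteEdges_of_coloring (c : G.Coloring Bool) {x : V → ZMod 2}
    {u : V} (hx : G.adjMatrix (ZMod 2) *ᵥ x = Pi.single u 1) :
    ∃ v, G.Adj u v ∧ ∃ S, IsEvenKernel (G.deleteEdges {s(u, v)}) S ∧ v ∈ S := by
  obtain ⟨x', hx', hcol⟩ := G.exists_mulVec_adjMatrix_eq_single_of_coloring c hx
  have hind (w w' : V) (hw : x' w = 1) (hw' : x' w' = 1) : ¬G.Adj w w' := by
    have h₁ : c w ≠ c u := fun h => by simp [hcol w h] at hw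
    have h₂ : c w' ≠ c u := fun h => by simp [hcol w' h] at hw'
    refine fun hadj => c.valid hadj ?_
    revert h₁ h₂
    cases c w <;> cases c w' <;> cases c u <;> simp
  obtain ⟨v, huv, hS, hv⟩ := G.exists_adj_isEvenKernel_deleteEdges_of_independent hx' hind
  exact ⟨v, huv, _, hS, hv⟩

end SimpleGraph

def gridGraph.parityColoring (m n : ℕ) : (gridGraph m n).Coloring Bool :=
  SimpleGraph.Coloring.mk (fun p => decide (Even (p.1.val + p.2.val))) fun {p q} h => by
    simp only [gridGraph] at h
    simp only [ne_eq, decide_eq_decide, Nat.even_iff]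
    omega

theorem grid_exists_move_evenKernel_general (m n : ℕ)
    (d : ℕ) (hd : d = Nat.gcd (m + 1) (n + 1)) (u : Fin m × Fin n)
    (h : d ∣ (u.1.val + 1) ∨ d ∣ (u.2.val + 1)) :
    ∃ v : Fin m × Fin n, (gridGraph m n).Adj u v ∧
      ∃ S : Set (Fin m × Fin n),
        IsEvenKernel ((gridGraph m n).deleteEdges {s(u, v)}) S ∧ v ∈ S := by
  subst hd
  obtain ⟨x, hx⟩ := ((gridGraph m n).adjMatrix (ZMod 2)).exists_mulVec_eq_of_forall_vecMul_eq_zero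
    (x := Pi.single u 1) fun y hy => by
      rw [dotProduct_single, mul_one]
      exact apply_eq_zero_of_vecMul_adjMatrix_gridGraph hy h
  exact (gridGraph m n).exists_adj_isEvenKernel_deleteEdges_of_coloring
    (gridGraph.parityColoring m n) hx

/-- For `m, n ≥ 1`, `d = gcd(m+1, n+1)` and a vertex `u = (a,b)` of the
grid graph `G_{m×n}` (with `a = u.1.val + 1`, `b = u.2.val + 1`) such that `d ∣ a` or
`d ∣ b`, there is a vertex `v` adjacent to `u` such that the graph `G_{m×n} - uv`
(with the single edge `uv` deleted) has an even kernel containing `v`. -/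
theorem grid_exists_move_evenKernel (m n : ℕ) (hm : 1 ≤ m) (hn : 1 ≤ n)
    (d : ℕ) (hd : d = Nat.gcd (m + 1) (n + 1)) (u : Fin m × Fin n)
    (h : d ∣ (u.1.val + 1) ∨ d ∣ (u.2.val + 1)) :
    ∃ v : Fin m × Fin n, (gridGraph m n).Adj u v ∧
      ∃ S : Set (Fin m × Fin n),
        IsEvenKernel ((gridGraph m n).deleteEdges {s(u, v)}) S ∧ v ∈ S :=
  grid_exists_move_evenKernel_general m n d hd u h
end
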